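/- There exists a constant C > 0 such that for every real T ≥ 2, ∫_0^1 (a_1(x)a_2(x) · 1_{{a_1(x)a_2(x) ≤ T}}) · (a_2(x)a_3(x) · 1_{{a_2(x)a_3(x) ≤ T}}) dμ(x) ≤ C · T, where μ is the Gauss measure. (Correlation bound for adjacent truncated products of consecutive partial quotients.) -/

import Mathlib

/-!
The integrand depends only on `(a₁, a₂, a₃)` and vanishes unless `a₁ a₂ ≤ T` and `a₂ a₃ ≤ T`.
The cylinder `{a₁ = a, a₂ = b, a₃ = c}` has Lebesgue measure at most `(abc)⁻²`, since each
inverse branch `t ↦ 1 / (a + t)` of the Gauss map contracts lengths by `a⁻²`, and the Gauss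
density is at most `1 / log 2`. Hence the integral is at most
`(1 / log 2) ∑_{b ≤ T} b⁻² (∑_{a ≤ T/b} b / a)²`. With `∑_{a ≤ N} 1/a ≤ 4 N^{1/4}` the inner
square is at most `16 b² (T/b)^{1/2}`, and `∑_{b ≤ T} b^{-1/2} ≤ 2 T^{1/2}` gives `32 T / log 2`.
-/

open MeasureTheory Filter Real Set

/-- The Gauss map `T(x) = 1/x - ⌊1/x⌋`, with `T(0) = 0`. -/
noncomputable def gaussMap (x : ℝ) : ℝ := if x = 0 then 0 else 1 / x - ⌊1 / x⌋

/-- The `n`-th partial quotient `a_n(x) = ⌊1 / T^{n-1}(x)⌋` (for `n ≥ 1`). -/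
noncomputable def pq (n : ℕ) (x : ℝ) : ℕ := ⌊1 / (gaussMap^[n - 1] x)⌋₊

/-- `S_n(x) = ∑_{i=1}^n a_i(x) a_{i+1}(x)`. -/
noncomputable def S (n : ℕ) (x : ℝ) : ℕ := ∑ i ∈ Finset.Icc 1 n, pq i x * pq (i + 1) x

/-- The Gauss measure `μ(A) = (1/log 2) ∫_A dx/(1+x)` on `(0,1)`. -/
noncomputable def gaussMeasure : Measure ℝ :=
  (volume.restrict (Set.Ioo (0:ℝ) 1)).withDensity
    (fun x => ENNReal.ofReal (1 / (Real.log 2 * (1 + x))))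

open scoped ENNReal NNReal

theorem gaussMap_eq_fract (x : ℝ) : gaussMap x = Int.fract (1 / x) := by
  rw [gaussMap]
  split_ifs with hx
  · simp [hx]
  · exact Int.self_sub_floor _

theorem gaussMap_mem_Ico (x : ℝ) : gaussMap x ∈ Ico 0 1 := by
  rw [gaussMap_eq_fract]
  exact ⟨Int.fract_nonneg _, Int.fract_lt_one _⟩

theorem measurable_gaussMap : Measurable gaussMap := by
  rw [funext gaussMap_eq_fract]
  exact measurable_fract.comp (measurable_const.div measurable_id)

@[fun_prop]
theorem measurable_pq (n : ℕ) : Measurable (pq n) :=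
  Nat.measurable_floor.comp (measurable_const.div (measurable_gaussMap.iterate _))

theorem pq_succ {n : ℕ} (hn : n ≠ 0) (x : ℝ) : pq (n + 1) x = pq n (gaussMap x) := by
  obtain ⟨m, rfl⟩ := Nat.exists_eq_succ_of_ne_zero hn
  simp only [pq, Nat.succ_sub_one, Function.iterate_succ_apply]

theorem pos_of_pq_one_ne_zero {x : ℝ} (hx : pq 1 x ≠ 0) : 0 < x := by
  have : 1 ≤ 1 / x := Nat.floor_pos.mp (Nat.pos_of_ne_zero hx)
  exact one_div_pos.mp (one_pos.trans_le this)

theorem one_div_eq_pq_one_add_gaussMap {x : ℝ} (hx : 0 ≤ x) :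
    1 / x = pq 1 x + gaussMap x := by
  rw [gaussMap_eq_fract, pq, Function.iterate_zero_apply,
    natCast_floor_eq_intCast_floor (by positivity), Int.floor_add_fract]

theorem volume_image_le_of_lipschitzOnWith {f : ℝ → ℝ} {K : ℝ≥0} {s : Set ℝ}
    (hf : LipschitzOnWith K f s) : volume (f '' s) ≤ K * volume s := by
  simpa [hausdorffMeasure_real] using hf.hausdorffMeasure_image_le zero_le_one

theorem lipschitzOnWith_inv_const_add {b : ℝ≥0} (hb : 0 < b) :
    LipschitzOnWith (b ^ 2)⁻¹ (fun t : ℝ => ((b : ℝ) + t)⁻¹) (Ici 0) := by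
  refine LipschitzOnWith.of_dist_le_mul fun x (hx : 0 ≤ x) y (hy : 0 ≤ y) => ?_
  have hb' : (0 : ℝ) < b := hb
  have hbx : 0 < b + x := by positivity
  have hby : 0 < b + y := by positivity
  rw [Real.dist_eq, Real.dist_eq, inv_sub_inv hbx.ne' hby.ne', abs_div,
    abs_of_pos (mul_pos hbx hby), add_sub_add_left_eq_sub, abs_sub_comm, NNReal.coe_inv,
    NNReal.coe_pow, inv_mul_eq_div]
  exact div_le_div_of_nonneg_left (abs_nonneg _) (by positivity) (by nlinarith)

theorem volume_setOf_pq_one_eq_and_gaussMap_mem_le {b : ℕ} (hb : b ≠ 0) (A : Set ℝ) :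
    volume {x | pq 1 x = b ∧ gaussMap x ∈ A} ≤ ((b : ℝ≥0∞)⁻¹) ^ 2 * volume A := by
  have hsub : {x | pq 1 x = b ∧ gaussMap x ∈ A} ⊆
      (fun t => ((b : ℝ≥0) + t)⁻¹) '' (A ∩ Ici 0) := by
    rintro x ⟨hx, hxA⟩
    have hx0 : 0 < x := pos_of_pq_one_ne_zero (hx ▸ hb)
    refine ⟨gaussMap x, ⟨hxA, (gaussMap_mem_Ico x).1⟩, ?_⟩
    rw [NNReal.coe_natCast, ← hx]
    change ((pq 1 x : ℝ) + gaussMap x)⁻¹ = x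
    rw [← one_div_eq_pq_one_add_gaussMap hx0.le, one_div, inv_inv]
  have hlip := (lipschitzOnWith_inv_const_add (b := b) (by positivity)).mono
    (inter_subset_right (s := A))
  calc volume {x | pq 1 x = b ∧ gaussMap x ∈ A}
      ≤ ((b : ℝ≥0) ^ 2)⁻¹ * volume (A ∩ Ici 0) :=
        (measure_mono hsub).trans (volume_image_le_of_lipschitzOnWith hlip)
    _ ≤ ((b : ℝ≥0∞)⁻¹) ^ 2 * volume A := by
        rw [ENNReal.coe_inv (by positivity), ENNReal.coe_pow, ENNReal.coe_natCast, ENNReal.inv_pow]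
        gcongr
        exact inter_subset_left

theorem volume_setOf_pq_one_eq_le {b : ℕ} (hb : b ≠ 0) :
    volume {x | pq 1 x = b} ≤ ((b : ℝ≥0∞)⁻¹) ^ 2 := by
  have h := volume_setOf_pq_one_eq_and_gaussMap_mem_le hb (Ico 0 1)
  simpa only [gaussMap_mem_Ico, and_true, Real.volume_Ico, sub_zero, ENNReal.ofReal_one,
    mul_one] using h

theorem volume_cylinder_three_le {a b c : ℕ} (ha : a ≠ 0) (hb : b ≠ 0) (hc : c ≠ 0) :
    volume {x | pq 1 x = a ∧ pq 2 x = b ∧ pq 3 x = c} ≤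
      ((a : ℝ≥0∞)⁻¹) ^ 2 * ((b : ℝ≥0∞)⁻¹) ^ 2 * ((c : ℝ≥0∞)⁻¹) ^ 2 := by
  have hset : {x | pq 1 x = a ∧ pq 2 x = b ∧ pq 3 x = c} =
      {x | pq 1 x = a ∧ gaussMap x ∈ {y | pq 1 y = b ∧ gaussMap y ∈ {z | pq 1 z = c}}} := by
    ext x
    simp only [mem_ofPred_eq, ← pq_succ one_ne_zero, ← pq_succ two_ne_zero]
  rw [hset, mul_assoc]
  refine (volume_setOf_pq_one_eq_and_gaussMap_mem_le ha _).trans (mul_le_mul_right ?_ _)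
  exact (volume_setOf_pq_one_eq_and_gaussMap_mem_le hb _).trans
    (mul_le_mul_right (volume_setOf_pq_one_eq_le hc) _)

theorem rpow_sub_one_le_rpow_sub_rpow {α x : ℝ} (h0 : 0 ≤ α) (h1 : α ≤ 1) (hx : 1 ≤ x) :
    α * x ^ (α - 1) ≤ x ^ α - (x - 1) ^ α := by
  have hx0 : 0 < x := one_pos.trans_le hx
  have hs : -1 ≤ -x⁻¹ := neg_le_neg (inv_le_one_of_one_le₀ hx)
  have bernoulli := rpow_one_add_le_one_add_mul_self hs h0 h1
  have hbase : 1 + -x⁻¹ = (x - 1) / x := by field_simp; ring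
  rw [hbase, div_rpow (by linarith) hx0.le, div_le_iff₀ (by positivity)] at bernoulli
  have hpow : x ^ (α - 1) = x ^ α * x⁻¹ := by rw [rpow_sub_one hx0.ne', div_eq_mul_inv]
  rw [hpow]
  linarith

theorem sum_Icc_rpow_sub_one_le {α : ℝ} (h0 : 0 < α) (h1 : α ≤ 1) (N : ℕ) :
    ∑ k ∈ Finset.Icc 1 N, (k : ℝ) ^ (α - 1) ≤ N ^ α / α := by
  induction N with
  | zero => simp [zero_rpow h0.ne']
  | succ N ih =>
    rw [Finset.sum_Icc_succ_top (Nat.le_add_left 1 N), le_div_iff₀ h0, add_mul]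
    have hstep := rpow_sub_one_le_rpow_sub_rpow h0.le h1
      (by simp : (1 : ℝ) ≤ ((N + 1 : ℕ) : ℝ))
    rw [le_div_iff₀ h0] at ih
    push_cast at hstep ⊢
    rw [add_sub_cancel_right] at hstep
    linarith

theorem sum_Icc_inv_le (N : ℕ) : ∑ k ∈ Finset.Icc 1 N, (k : ℝ)⁻¹ ≤ 4 * N ^ (1 / 4 : ℝ) := by
  calc ∑ k ∈ Finset.Icc 1 N, (k : ℝ)⁻¹ ≤ ∑ k ∈ Finset.Icc 1 N, (k : ℝ) ^ (1 / 4 - 1 : ℝ) := by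
        refine Finset.sum_le_sum fun k hk => ?_
        rw [← rpow_neg_one]
        exact rpow_le_rpow_of_exponent_le (by exact_mod_cast (Finset.mem_Icc.mp hk).1)
          (by norm_num)
    _ ≤ N ^ (1 / 4 : ℝ) / (1 / 4) := sum_Icc_rpow_sub_one_le (by norm_num) (by norm_num) N
    _ = 4 * N ^ (1 / 4 : ℝ) := by ring

noncomputable def truncVal (T : ℝ) (n : ℕ) : ℝ := if (n : ℝ) ≤ T then n else 0

theorem truncVal_nonneg (T : ℝ) (n : ℕ) : 0 ≤ truncVal T n := by
  unfold truncVal; split_ifs <;> positivity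

theorem truncVal_le (T : ℝ) (n : ℕ) : truncVal T n ≤ n := by
  unfold truncVal; split_ifs <;> simp

theorem truncVal_ne_zero {T : ℝ} {n : ℕ} (h : truncVal T n ≠ 0) : n ≠ 0 ∧ (n : ℝ) ≤ T := by
  unfold truncVal at h
  split_ifs at h with hn
  · exact ⟨by rintro rfl; simp at h, hn⟩
  · exact absurd rfl h

-- The `a = 0` term vanishes: it is `ENNReal.ofReal 0 * ⊤ = 0`.
noncomputable def truncTsum (T : ℝ) (b : ℕ) : ℝ≥0∞ :=
  ∑' a : ℕ, ENNReal.ofReal (truncVal T (a * b)) * ((a : ℝ≥0∞)⁻¹) ^ 2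

theorem truncTsum_le {T : ℝ} (hT : 0 ≤ T) {b : ℕ} (hb : b ≠ 0) :
    truncTsum T b ≤ b * ENNReal.ofReal (4 * (T / b) ^ (1 / 4 : ℝ)) := by
  have hb' : (0 : ℝ) < b := by positivity
  have hsupp : ∀ a ∉ Finset.Icc 1 ⌊T / b⌋₊,
      ENNReal.ofReal (truncVal T (a * b)) * ((a : ℝ≥0∞)⁻¹) ^ 2 = 0 := by
    intro a ha
    by_contra hne
    obtain ⟨hab, habT⟩ := truncVal_ne_zero fun h => hne (by rw [h, ENNReal.ofReal_zero, zero_mul])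
    refine ha (Finset.mem_Icc.mpr ⟨Nat.one_le_iff_ne_zero.mpr (left_ne_zero_of_mul hab), ?_⟩)
    exact Nat.le_floor ((le_div_iff₀ hb').mpr (by exact_mod_cast habT))
  have hterm : ∀ a ∈ Finset.Icc 1 ⌊T / b⌋₊,
      ENNReal.ofReal (truncVal T (a * b)) * ((a : ℝ≥0∞)⁻¹) ^ 2 ≤ b * (a : ℝ≥0∞)⁻¹ := by
    intro a ha
    have ha0 : (a : ℝ≥0∞) ≠ 0 := by simpa using Nat.one_le_iff_ne_zero.mp (Finset.mem_Icc.mp ha).1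
    calc ENNReal.ofReal (truncVal T (a * b)) * ((a : ℝ≥0∞)⁻¹) ^ 2
        ≤ (a * b) * ((a : ℝ≥0∞)⁻¹) ^ 2 := by
          gcongr
          simpa using ENNReal.ofReal_le_ofReal (truncVal_le T (a * b))
      _ = b * (a : ℝ≥0∞)⁻¹ * (a * (a : ℝ≥0∞)⁻¹) := by ring
      _ = b * (a : ℝ≥0∞)⁻¹ := by rw [ENNReal.mul_inv_cancel ha0 (ENNReal.natCast_ne_top a), mul_one]
  have hharm : ∑ a ∈ Finset.Icc 1 ⌊T / b⌋₊, (a : ℝ≥0∞)⁻¹ ≤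
      ENNReal.ofReal (4 * (T / b) ^ (1 / 4 : ℝ)) := by
    have hcast : ∑ a ∈ Finset.Icc 1 ⌊T / b⌋₊, (a : ℝ≥0∞)⁻¹ =
        ENNReal.ofReal (∑ a ∈ Finset.Icc 1 ⌊T / b⌋₊, (a : ℝ)⁻¹) := by
      rw [ENNReal.ofReal_sum_of_nonneg fun a _ => by positivity]
      refine Finset.sum_congr rfl fun a ha => ?_
      rw [ENNReal.ofReal_inv_of_pos (by exact_mod_cast (Finset.mem_Icc.mp ha).1),
        ENNReal.ofReal_natCast]
    rw [hcast]
    refine ENNReal.ofReal_le_ofReal ((sum_Icc_inv_le _).trans ?_)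
    gcongr
    exact Nat.floor_le (by positivity)
  calc truncTsum T b
      = ∑ a ∈ Finset.Icc 1 ⌊T / b⌋₊, ENNReal.ofReal (truncVal T (a * b)) * ((a : ℝ≥0∞)⁻¹) ^ 2 :=
        tsum_eq_sum hsupp
    _ ≤ ∑ a ∈ Finset.Icc 1 ⌊T / b⌋₊, b * (a : ℝ≥0∞)⁻¹ := Finset.sum_le_sum hterm
    _ ≤ b * ENNReal.ofReal (4 * (T / b) ^ (1 / 4 : ℝ)) := by
        rw [← Finset.mul_sum]
        gcongr

theorem truncTsum_eq_zero {T : ℝ} {b : ℕ} (hb : b ∉ Finset.Icc 1 ⌊T⌋₊) : truncTsum T b = 0 := by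
  refine ENNReal.tsum_eq_zero.mpr fun a => ?_
  by_cases h : truncVal T (a * b) = 0
  · rw [h, ENNReal.ofReal_zero, zero_mul]
  obtain ⟨hab, habT⟩ := truncVal_ne_zero h
  refine absurd (Finset.mem_Icc.mpr ⟨Nat.one_le_iff_ne_zero.mpr (right_ne_zero_of_mul hab), ?_⟩) hb
  refine Nat.le_floor (le_trans ?_ habT)
  exact_mod_cast Nat.le_mul_of_pos_left b (Nat.pos_of_ne_zero (left_ne_zero_of_mul hab))

theorem sq_four_mul_rpow_quarter_div {T b : ℝ} (hT : 0 ≤ T) (hb : 0 < b) :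
    (4 * (T / b) ^ (1 / 4 : ℝ)) ^ 2 = 16 * T ^ (1 / 2 : ℝ) * b ^ (1 / 2 - 1 : ℝ) := by
  rw [mul_pow, ← rpow_natCast ((T / b) ^ _), ← rpow_mul (by positivity), div_rpow hT hb.le,
    show (1 / 2 - 1 : ℝ) = -(1 / 2) by norm_num, rpow_neg hb.le]
  norm_num
  ring

theorem inv_sq_mul_truncTsum_sq_le {T : ℝ} (hT : 0 ≤ T) {b : ℕ} (hb : b ≠ 0) :
    ((b : ℝ≥0∞)⁻¹) ^ 2 * truncTsum T b ^ 2 ≤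
      ENNReal.ofReal (16 * T ^ (1 / 2 : ℝ) * (b : ℝ) ^ (1 / 2 - 1 : ℝ)) := by
  calc ((b : ℝ≥0∞)⁻¹) ^ 2 * truncTsum T b ^ 2
      ≤ ((b : ℝ≥0∞)⁻¹) ^ 2 * (b * ENNReal.ofReal (4 * (T / b) ^ (1 / 4 : ℝ))) ^ 2 := by
        gcongr
        exact truncTsum_le hT hb
    _ = ((b : ℝ≥0∞) * (b : ℝ≥0∞)⁻¹) ^ 2 * ENNReal.ofReal (4 * (T / b) ^ (1 / 4 : ℝ)) ^ 2 := by
        ring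
    _ = ENNReal.ofReal (16 * T ^ (1 / 2 : ℝ) * (b : ℝ) ^ (1 / 2 - 1 : ℝ)) := by
        rw [ENNReal.mul_inv_cancel (by exact_mod_cast hb) (ENNReal.natCast_ne_top b), one_pow,
          one_mul, ← ENNReal.ofReal_pow (by positivity),
          sq_four_mul_rpow_quarter_div hT (by exact_mod_cast Nat.pos_of_ne_zero hb)]

theorem sum_Icc_floor_mul_rpow_le {T : ℝ} (hT : 0 ≤ T) :
    ∑ b ∈ Finset.Icc 1 ⌊T⌋₊, 16 * T ^ (1 / 2 : ℝ) * (b : ℝ) ^ (1 / 2 - 1 : ℝ) ≤ 32 * T := by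
  rw [← Finset.mul_sum]
  calc 16 * T ^ (1 / 2 : ℝ) * ∑ b ∈ Finset.Icc 1 ⌊T⌋₊, (b : ℝ) ^ (1 / 2 - 1 : ℝ)
      ≤ 16 * T ^ (1 / 2 : ℝ) * ((⌊T⌋₊ : ℝ) ^ (1 / 2 : ℝ) / (1 / 2)) := by
        gcongr
        exact sum_Icc_rpow_sub_one_le (by norm_num) (by norm_num) _
    _ ≤ 16 * T ^ (1 / 2 : ℝ) * (T ^ (1 / 2 : ℝ) / (1 / 2)) := by
        gcongr
        exact Nat.floor_le hT
    _ = 32 * T := by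
        rw [mul_div_assoc', mul_assoc, ← rpow_add' hT (by norm_num)]
        norm_num
        ring

theorem tsum_truncVal_mul_truncVal_le {T : ℝ} (hT : 0 ≤ T) :
    ∑' p : ℕ × ℕ × ℕ, ENNReal.ofReal (truncVal T (p.1 * p.2.1)) *
        ENNReal.ofReal (truncVal T (p.2.1 * p.2.2)) *
        (((p.1 : ℝ≥0∞)⁻¹) ^ 2 * ((p.2.1 : ℝ≥0∞)⁻¹) ^ 2 * ((p.2.2 : ℝ≥0∞)⁻¹) ^ 2) ≤
      ENNReal.ofReal (32 * T) := by
  calc _ = ∑' b : ℕ, ((b : ℝ≥0∞)⁻¹) ^ 2 * truncTsum T b ^ 2 := by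
        simp only [ENNReal.tsum_prod']
        rw [ENNReal.tsum_comm]
        refine tsum_congr fun b => ?_
        simp only [truncTsum, sq, ← ENNReal.tsum_mul_left, ← ENNReal.tsum_mul_right]
        refine tsum_congr fun a => tsum_congr fun c => ?_
        rw [mul_comm b c]
        ring
    _ = ∑ b ∈ Finset.Icc 1 ⌊T⌋₊, ((b : ℝ≥0∞)⁻¹) ^ 2 * truncTsum T b ^ 2 :=
        tsum_eq_sum fun b hb => by rw [truncTsum_eq_zero hb, zero_pow two_ne_zero, mul_zero]
    _ ≤ ∑ b ∈ Finset.Icc 1 ⌊T⌋₊,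
          ENNReal.ofReal (16 * T ^ (1 / 2 : ℝ) * (b : ℝ) ^ (1 / 2 - 1 : ℝ)) :=
        Finset.sum_le_sum fun b hb =>
          inv_sq_mul_truncTsum_sq_le hT (Nat.one_le_iff_ne_zero.mp (Finset.mem_Icc.mp hb).1)
    _ ≤ ENNReal.ofReal (32 * T) := by
        rw [← ENNReal.ofReal_sum_of_nonneg fun b _ => by positivity]
        exact ENNReal.ofReal_le_ofReal (sum_Icc_floor_mul_rpow_le hT)

theorem lintegral_comp_eq_tsum {α β : Type*} [MeasurableSpace α] [MeasurableSpace β] [Countable β]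
    [MeasurableSingletonClass β] (μ : Measure α) {g : α → β} (hg : Measurable g)
    (f : β → ℝ≥0∞) : ∫⁻ x, f (g x) ∂μ = ∑' b, f b * μ (g ⁻¹' {b}) := by
  rw [← lintegral_map (measurable_of_countable f) hg, lintegral_countable']
  exact tsum_congr fun b => by rw [Measure.map_apply hg (measurableSet_singleton b)]

theorem gaussMeasure_le_smul_volume : gaussMeasure ≤ ENNReal.ofReal (log 2)⁻¹ • volume := by
  calc gaussMeasure
      ≤ (volume.restrict (Ioo (0 : ℝ) 1)).withDensity fun _ => ENNReal.ofReal (log 2)⁻¹ := by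
        refine withDensity_mono ((ae_restrict_mem measurableSet_Ioo).mono fun x hx => ?_)
        refine ENNReal.ofReal_le_ofReal ?_
        rw [one_div, mul_inv]
        exact mul_le_of_le_one_right (by positivity) (inv_le_one_of_one_le₀ (by linarith [hx.1]))
    _ ≤ ENNReal.ofReal (log 2)⁻¹ • volume := by
        rw [withDensity_const]
        gcongr
        exact Measure.restrict_le_self

theorem measurable_pq_one_two_three : Measurable fun x => (pq 1 x, pq 2 x, pq 3 x) :=
  (measurable_pq 1).prodMk ((measurable_pq 2).prodMk (measurable_pq 3))

theorem lintegral_truncVal_mul_truncVal_le {T : ℝ} (hT : 0 ≤ T) :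
    ∫⁻ x, ENNReal.ofReal (truncVal T (pq 1 x * pq 2 x) * truncVal T (pq 2 x * pq 3 x)) ≤
      ENNReal.ofReal (32 * T) := by
  set f : ℕ × ℕ × ℕ → ℝ≥0∞ := fun p =>
    ENNReal.ofReal (truncVal T (p.1 * p.2.1)) * ENNReal.ofReal (truncVal T (p.2.1 * p.2.2))
  have hcyl : ∀ p : ℕ × ℕ × ℕ, f p * volume ((fun x => (pq 1 x, pq 2 x, pq 3 x)) ⁻¹' {p}) ≤
      f p * (((p.1 : ℝ≥0∞)⁻¹) ^ 2 * ((p.2.1 : ℝ≥0∞)⁻¹) ^ 2 * ((p.2.2 : ℝ≥0∞)⁻¹) ^ 2) := by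
    rintro ⟨a, b, c⟩
    by_cases hab : truncVal T (a * b) = 0
    · simp [f, hab]
    by_cases hbc : truncVal T (b * c) = 0
    · simp [f, hbc]
    obtain ⟨hab, -⟩ := truncVal_ne_zero hab
    obtain ⟨hbc, -⟩ := truncVal_ne_zero hbc
    have hpre : (fun x => (pq 1 x, pq 2 x, pq 3 x)) ⁻¹' {(a, b, c)} =
        {x | pq 1 x = a ∧ pq 2 x = b ∧ pq 3 x = c} := by
      ext x
      simp
    rw [hpre]
    gcongr
    exact volume_cylinder_three_le (left_ne_zero_of_mul hab) (left_ne_zero_of_mul hbc)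
      (right_ne_zero_of_mul hbc)
  calc ∫⁻ x, ENNReal.ofReal (truncVal T (pq 1 x * pq 2 x) * truncVal T (pq 2 x * pq 3 x))
      = ∫⁻ x, f (pq 1 x, pq 2 x, pq 3 x) := by
        simp only [f, ENNReal.ofReal_mul (truncVal_nonneg _ _)]
    _ = ∑' p, f p * volume ((fun x => (pq 1 x, pq 2 x, pq 3 x)) ⁻¹' {p}) :=
        lintegral_comp_eq_tsum volume measurable_pq_one_two_three f
    _ ≤ ENNReal.ofReal (32 * T) := by
        refine (ENNReal.tsum_le_tsum hcyl).trans ?_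
        simpa only [f, mul_assoc] using tsum_truncVal_mul_truncVal_le hT

theorem integral_truncVal_mul_truncVal_le {T : ℝ} (hT : 0 ≤ T) :
    ∫ x, truncVal T (pq 1 x * pq 2 x) * truncVal T (pq 2 x * pq 3 x) ∂gaussMeasure ≤
      32 / log 2 * T := by
  have hmeas : Measurable fun x => truncVal T (pq 1 x * pq 2 x) * truncVal T (pq 2 x * pq 3 x) := by
    fun_prop
  rw [integral_eq_lintegral_of_nonneg_ae
    (ae_of_all _ fun x => mul_nonneg (truncVal_nonneg _ _) (truncVal_nonneg _ _))
    hmeas.aestronglyMeasurable]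
  refine ENNReal.toReal_le_of_le_ofReal (by positivity) ?_
  calc ∫⁻ x, ENNReal.ofReal (truncVal T (pq 1 x * pq 2 x) * truncVal T (pq 2 x * pq 3 x))
        ∂gaussMeasure
      ≤ ENNReal.ofReal (log 2)⁻¹ *
          ∫⁻ x, ENNReal.ofReal (truncVal T (pq 1 x * pq 2 x) * truncVal T (pq 2 x * pq 3 x)) := by
        refine (lintegral_mono' gaussMeasure_le_smul_volume le_rfl).trans_eq ?_
        rw [lintegral_smul_measure, smul_eq_mul]
    _ ≤ ENNReal.ofReal (log 2)⁻¹ * ENNReal.ofReal (32 * T) := by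
        gcongr
        exact lintegral_truncVal_mul_truncVal_le hT
    _ = ENNReal.ofReal (32 / log 2 * T) := by
        rw [← ENNReal.ofReal_mul (by positivity)]
        ring_nf

theorem correlation_adjacent_truncated :
    ∃ C : ℝ, 0 < C ∧ ∀ T : ℝ, 2 ≤ T →
      (∫ x,
          (if ((pq 1 x * pq 2 x : ℕ) : ℝ) ≤ T then ((pq 1 x * pq 2 x : ℕ) : ℝ) else 0) *
          (if ((pq 2 x * pq 3 x : ℕ) : ℝ) ≤ T then ((pq 2 x * pq 3 x : ℕ) : ℝ) else 0)
          ∂gaussMeasure) ≤ C * T :=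
  ⟨32 / log 2, by positivity, fun _ hT => integral_truncVal_mul_truncVal_le (by linarith)⟩
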